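/- Let X ⊂ ℝⁿ be a regular convex set and f a projectively self-concordant barrier on X. Then ⟨f'(x), y − x⟩ < 1 for all x, y in the interior of X. -/

import Mathlib

open Filter

variable {E : Type*} [NormedAddCommGroup E] [NormedSpace ℝ E]

/-- A regular convex set: closed, convex, with nonempty interior, containing no lines. -/
def IsRegularConvex (X : Set E) : Prop :=
  IsClosed X ∧ Convex ℝ X ∧ (interior X).Nonempty ∧
    ∀ x d : E, d ≠ 0 → ¬ (∀ t : ℝ, x + t • d ∈ X)

/-- Affine metric `G(x)[h,h] = f''(x)[h,h] - (f'(x)[h])²`. -/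
noncomputable def affMetric (f : E → ℝ) (x h : E) : ℝ :=
  iteratedFDeriv ℝ 2 f x (fun _ => h) - (fderiv ℝ f x h)^2

/-- Cubic form `C(x)[h,h,h]`. -/
noncomputable def cubicForm (f : E → ℝ) (x h : E) : ℝ :=
  iteratedFDeriv ℝ 3 f x (fun _ => h)
    - 6 * iteratedFDeriv ℝ 2 f x (fun _ => h) * fderiv ℝ f x h
    + 4 * (fderiv ℝ f x h)^3

/-- Projectively self-concordant barrier with parameter γ on X. -/
def IsPSCBarrier (X : Set E) (f : E → ℝ) (γ : ℝ) : Prop :=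
  ContDiffOn ℝ 3 f (interior X) ∧
  (∀ x ∈ interior X, ∀ h : E, h ≠ 0 → 0 < affMetric f x h) ∧
  (∀ x ∈ frontier X, Tendsto f (nhdsWithin x (interior X)) atTop) ∧
  (∀ x ∈ interior X, ∀ h : E, |cubicForm f x h| ≤ 2 * γ * (affMetric f x h) ^ ((3:ℝ)/2))

/-- `σ_x(h) = inf { 1/t : t > 0, x + t•h ∈ X }`. -/
noncomputable def sigmaDist (X : Set E) (x h : E) : ℝ :=
  sInf {r : ℝ | ∃ t : ℝ, 0 < t ∧ x + t • h ∈ X ∧ r = 1/t}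

/-!
Write `G(x)[h,h] = f''(x)[h,h] - (f'(x)[h])²`. Along the segment `t ↦ x + t (y - x)` the function
`ψ = exp (-f)` has `ψ'' = -G[h,h] ψ < 0`, so it is strictly concave and lies strictly below its
tangent at `x`: `0 < ψ(y) < ψ(x) (1 - f'(x)[y - x])`.
-/

open Set

theorem strictConcaveOn_exp_neg_of_sq_lt {φ φ' φ'' : ℝ → ℝ} {a b : ℝ}
    (hφ : ∀ t ∈ Icc a b, HasDerivAt φ (φ' t) t) (hφ' : ∀ t ∈ Icc a b, HasDerivAt φ' (φ'' t) t)
    (hsq : ∀ t ∈ Icc a b, φ' t ^ 2 < φ'' t) :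
    StrictConcaveOn ℝ (Icc a b) (fun t => Real.exp (-φ t)) := by
  have hψ : ∀ t ∈ Icc a b, HasDerivAt (fun s => Real.exp (-φ s)) (-φ' t * Real.exp (-φ t)) t :=
    fun t ht => by simpa [mul_comm] using (hφ t ht).neg.exp
  have hψ' : ∀ t ∈ Icc a b, HasDerivAt (fun s => -φ' s * Real.exp (-φ s))
      ((φ' t ^ 2 - φ'' t) * Real.exp (-φ t)) t := fun t ht =>
    ((hφ' t ht).neg.mul (hψ t ht)).congr_deriv (by rw [Pi.neg_apply]; ring)
  have hanti : StrictAntiOn (fun s => -φ' s * Real.exp (-φ s)) (Icc a b) :=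
    strictAntiOn_of_hasDerivWithinAt_neg (convex_Icc a b)
      (fun t ht => (hψ' t ht).continuousAt.continuousWithinAt)
      (fun t ht => (hψ' t (interior_subset ht)).hasDerivWithinAt)
      (fun t ht => mul_neg_of_neg_of_pos (by linarith [hsq t (interior_subset ht)])
        (Real.exp_pos _))
  refine StrictAntiOn.strictConcaveOn_of_deriv (convex_Icc a b)
    (fun t ht => (hψ t ht).continuousAt.continuousWithinAt) ?_
  exact (hanti.mono interior_subset).congr
    (fun t ht => ((hψ t (interior_subset ht)).deriv).symm)

theorem mul_sub_lt_one_of_sq_lt {φ φ' φ'' : ℝ → ℝ} {a b : ℝ} (hab : a < b)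
    (hφ : ∀ t ∈ Icc a b, HasDerivAt φ (φ' t) t) (hφ' : ∀ t ∈ Icc a b, HasDerivAt φ' (φ'' t) t)
    (hsq : ∀ t ∈ Icc a b, φ' t ^ 2 < φ'' t) :
    φ' a * (b - a) < 1 := by
  have ha : a ∈ Icc a b := left_mem_Icc.2 hab.le
  have hb : b ∈ Icc a b := right_mem_Icc.2 hab.le
  have htangent := (strictConcaveOn_exp_neg_of_sq_lt hφ hφ' hsq).slope_lt_of_hasDerivAt ha hb hab
    (by simpa [mul_comm] using (hφ a ha).neg.exp)
  rw [slope_def_field, div_lt_iff₀ (sub_pos.2 hab)] at htangent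
  have hexp_a := Real.exp_pos (-φ a)
  have hexp_b := Real.exp_pos (-φ b)
  nlinarith

variable {F : Type*} [NormedAddCommGroup F] [NormedSpace ℝ F]

theorem hasDerivAt_comp_add_smul {f : E → F} {x h : E} {t : ℝ}
    (hf : DifferentiableAt ℝ f (x + t • h)) :
    HasDerivAt (fun s : ℝ => f (x + s • h)) (fderiv ℝ f (x + t • h) h) t :=
  hf.hasFDerivAt.comp_hasDerivAt t <|
    (((hasDerivAt_id t).smul_const h).const_add x).congr_deriv (one_smul ℝ h)

theorem hasDerivAt_fderiv_comp_add_smul {f : E → F} {x h : E} {t : ℝ}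
    (hf : ContDiffAt ℝ 2 f (x + t • h)) :
    HasDerivAt (fun s : ℝ => fderiv ℝ f (x + s • h) h)
      (iteratedFDeriv ℝ 2 f (x + t • h) (fun _ => h)) t := by
  have hdiff : DifferentiableAt ℝ (fderiv ℝ f) (x + t • h) :=
    (hf.fderiv_right (m := 1) le_rfl).differentiableAt one_ne_zero
  rw [iteratedFDeriv_two_apply]
  simpa using (hasDerivAt_comp_add_smul hdiff).clm_apply (hasDerivAt_const t h)

theorem fderiv_sub_lt_one_of_affMetric_pos {U : Set E} (hU : Convex ℝ U) (hUo : IsOpen U)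
    {f : E → ℝ} (hf : ContDiffOn ℝ 2 f U) (hG : ∀ x ∈ U, ∀ h : E, h ≠ 0 → 0 < affMetric f x h)
    {x y : E} (hx : x ∈ U) (hy : y ∈ U) :
    fderiv ℝ f x (y - x) < 1 := by
  rcases eq_or_ne y x with rfl | hne
  · simp
  have hmem : ∀ t ∈ Icc (0 : ℝ) 1, x + t • (y - x) ∈ U := fun t ht => by
    simpa [AffineMap.lineMap_apply_module', add_comm] using hU.lineMap_mem hx hy ht
  have hseg : ∀ t ∈ Icc (0 : ℝ) 1, ContDiffAt ℝ 2 f (x + t • (y - x)) := fun t ht =>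
    hf.contDiffAt (hUo.mem_nhds (hmem t ht))
  have := mul_sub_lt_one_of_sq_lt zero_lt_one
    (fun t ht => hasDerivAt_comp_add_smul ((hseg t ht).differentiableAt two_ne_zero))
    (fun t ht => hasDerivAt_fderiv_comp_add_smul (hseg t ht))
    (fun t ht => sub_pos.1 <| hG _ (hmem t ht) _ (sub_ne_zero.2 hne))
  simpa using this

theorem stmt_10_general {n : ℕ} (X : Set (EuclideanSpace ℝ (Fin n)))
    (hX : IsRegularConvex X) (ν : ℝ)
    (f : EuclideanSpace ℝ (Fin n) → ℝ)
    (hf : IsPSCBarrier X f ((ν - 2)/Real.sqrt (ν - 1))) :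
    ∀ x ∈ interior X, ∀ y ∈ interior X, fderiv ℝ f x (y - x) < 1 := fun _ hx _ hy =>
  fderiv_sub_lt_one_of_affMetric_pos hX.2.1.interior isOpen_interior
    (hf.1.of_le (by norm_num)) hf.2.1 hx hy

theorem stmt_10 {n : ℕ} (X : Set (EuclideanSpace ℝ (Fin n)))
    (hX : IsRegularConvex X) (ν : ℝ) (hν : 2 ≤ ν)
    (f : EuclideanSpace ℝ (Fin n) → ℝ)
    (hf : IsPSCBarrier X f ((ν - 2)/Real.sqrt (ν - 1))) :
    ∀ x ∈ interior X, ∀ y ∈ interior X, fderiv ℝ f x (y - x) < 1 :=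
  stmt_10_general X hX ν f hf
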